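/- arXiv:1604.02887 — 2 statements merged into one kernel-verified Lean document; each statement's English description precedes it below -/
import Mathlib

section
/- Let φ, const, val_{y,ψ}, φ^⊤ and φ' = φ^⊤ ∧ const ∧ ⋀_{y,ψ} val_{y,ψ} be as in the translation of LRV without ≉-obligations into LRV with ⊤-tests. Let σ be any model and let σ_φ be any model such that: (a) |σ_φ| = |σ|; (b) σ_φ(i)(x) = σ(i)(x) for every 0 ≤ i < |σ| and every x ∈ vars(φ); (c) there is a data value d not in {σ(i)(x) : x ∈ vars(φ), 0 ≤ i < |σ|} with σ_φ(i)(k) = d for every i; and (d) for every i, y, ψ: σ_φ(i)(v_{y,ψ}) = σ_φ(i)(y) if σ,i ⊨ ψ, and σ_φ(i)(v_{y,ψ}) = d otherwise. Then σ ⊨ φ if and only if σ_φ ⊨ φ'. -/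
/-- Syntax of LRV formulas.  Variables are natural numbers.
`eqX x j y` is the atomic formula `x ≈ X^j y`,
`futEq x y φ` is the future obligation `⟨x ≈ y? φ⟩`,
`futNeq x y φ` is `⟨x ≉ y? φ⟩`;
`untl` is "until" (U), `prev` is `X⁻¹`, `sinc` is "since" (S). -/
inductive LRV : Type
  | eqX : ℕ → ℕ → ℕ → LRV
  | futEq : ℕ → ℕ → LRV → LRV
  | futNeq : ℕ → ℕ → LRV → LRV
  | and : LRV → LRV → LRV
  | not : LRV → LRV
  | next : LRV → LRV
  | untl : LRV → LRV → LRV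
  | prev : LRV → LRV
  | sinc : LRV → LRV → LRV
  deriving DecidableEq

/-- A model is a finite (intended: non-empty) sequence of valuations. -/
abbrev LRVModel := List (ℕ → ℕ)

/-- The valuation of a model at position `i`. -/
def mval (σ : LRVModel) (i : ℕ) : ℕ → ℕ := σ.getD i (fun _ => 0)

/-- Satisfaction relation `σ, i ⊨ φ` for LRV over finite models. -/
def LRVSat (σ : LRVModel) : LRV → ℕ → Prop
  | .eqX x j y, i => i + j < σ.length ∧ mval σ i x = mval σ (i + j) y
  | .futEq x y φ, i => ∃ j, i < j ∧ j < σ.length ∧ mval σ i x = mval σ j y ∧ LRVSat σ φ j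
  | .futNeq x y φ, i => ∃ j, i < j ∧ j < σ.length ∧ mval σ i x ≠ mval σ j y ∧ LRVSat σ φ j
  | .and φ ψ, i => LRVSat σ φ i ∧ LRVSat σ ψ i
  | .not φ, i => ¬ LRVSat σ φ i
  | .next φ, i => i + 1 < σ.length ∧ LRVSat σ φ (i + 1)
  | .untl φ ψ, i => ∃ j, i ≤ j ∧ j < σ.length ∧ LRVSat σ ψ j ∧ ∀ l, i ≤ l → l < j → LRVSat σ φ l
  | .prev φ, i => 0 < i ∧ LRVSat σ φ (i - 1)
  | .sinc φ ψ, i => ∃ j, j ≤ i ∧ LRVSat σ ψ j ∧ ∀ l, j < l → l ≤ i → LRVSat σ φ l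

/-- Satisfiability: truth at position 0 in some non-empty model. -/
def LRVSatisfiable (φ : LRV) : Prop := ∃ σ : LRVModel, σ ≠ [] ∧ LRVSat σ φ 0

/-- ⊤ (true at every position of a model). -/
def LRV.top : LRV := .eqX 0 0 0

/-- Disjunction (derived). -/
def LRV.lor (φ ψ : LRV) : LRV := .not (.and (.not φ) (.not ψ))

/-- Implication (derived). -/
def LRV.limp (φ ψ : LRV) : LRV := LRV.lor (.not φ) ψ

/-- Bi-implication (derived). -/
def LRV.liff (φ ψ : LRV) : LRV := .and (LRV.limp φ ψ) (LRV.limp ψ φ)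

/-- F (eventually, at the current or a later position). -/
def LRV.evF (φ : LRV) : LRV := .untl LRV.top φ

/-- G (always, from the current position on). -/
def LRV.alG (φ : LRV) : LRV := .not (LRV.evF (.not φ))

/-- Iterated next `X^n`. -/
def LRV.nextn : ℕ → LRV → LRV
  | 0, φ => φ
  | n + 1, φ => .next (LRV.nextn n φ)

/-- Iterated previous `(X⁻¹)^n`. -/
def LRV.prevn : ℕ → LRV → LRV
  | 0, φ => φ
  | n + 1, φ => .prev (LRV.prevn n φ)

/-- `x ≉ X^j y`, i.e. `¬(x ≈ X^j y) ∧ X^j ⊤`. -/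
def LRV.neqX (x j y : ℕ) : LRV := .and (.not (.eqX x j y)) (LRV.nextn j LRV.top)

/-- Finite conjunction. -/
def lrvBigAnd (l : List LRV) : LRV := l.foldr .and LRV.top

/-- Finite disjunction. -/
def lrvBigOr (l : List LRV) : LRV := l.foldr LRV.lor (.not LRV.top)

/-- The finite set of variables occurring in a formula. -/
def LRV.vars : LRV → Finset ℕ
  | .eqX x _ y => {x, y}
  | .futEq x y ψ => insert x (insert y ψ.vars)
  | .futNeq x y ψ => insert x (insert y ψ.vars)
  | .and a b => a.vars ∪ b.vars
  | .not a => a.vars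
  | .next a => a.vars
  | .untl a b => a.vars ∪ b.vars
  | .prev a => a.vars
  | .sinc a b => a.vars ∪ b.vars

/-- The list of all subformulas of a formula (including itself, and including
subformulas occurring inside the tests of obligations). -/
def LRV.subfs : LRV → List LRV
  | .eqX x j y => [.eqX x j y]
  | .futEq x y ψ => .futEq x y ψ :: ψ.subfs
  | .futNeq x y ψ => .futNeq x y ψ :: ψ.subfs
  | .and a b => .and a b :: (a.subfs ++ b.subfs)
  | .not a => .not a :: a.subfs
  | .next a => .next a :: a.subfs
  | .untl a b => .untl a b :: (a.subfs ++ b.subfs)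
  | .prev a => .prev a :: a.subfs
  | .sinc a b => .sinc a b :: (a.subfs ++ b.subfs)

/-- The tests of a formula: all ψ such that `⟨x ≈ y? ψ⟩` or `⟨x ≉ y? ψ⟩` occurs in it. -/
def LRV.tests : LRV → List LRV
  | .eqX _ _ _ => []
  | .futEq _ _ ψ => ψ :: ψ.tests
  | .futNeq _ _ ψ => ψ :: ψ.tests
  | .and a b => a.tests ++ b.tests
  | .not a => a.tests
  | .next a => a.tests
  | .untl a b => a.tests ++ b.tests
  | .prev a => a.tests
  | .sinc a b => a.tests ++ b.tests

/-- A formula contains no obligations `⟨· ≈ ·? ·⟩` or `⟨· ≉ ·? ·⟩`. -/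
def LRV.obligFree : LRV → Prop
  | .eqX _ _ _ => True
  | .futEq _ _ _ => False
  | .futNeq _ _ _ => False
  | .and a b => a.obligFree ∧ b.obligFree
  | .not a => a.obligFree
  | .next a => a.obligFree
  | .untl a b => a.obligFree ∧ b.obligFree
  | .prev a => a.obligFree
  | .sinc a b => a.obligFree ∧ b.obligFree

/-- A formula contains no subformula of the form `⟨· ≉ ·? ·⟩`. -/
def LRV.futNeqFree : LRV → Prop
  | .eqX _ _ _ => True
  | .futEq _ _ ψ => ψ.futNeqFree
  | .futNeq _ _ _ => False
  | .and a b => a.futNeqFree ∧ b.futNeqFree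
  | .not a => a.futNeqFree
  | .next a => a.futNeqFree
  | .untl a b => a.futNeqFree ∧ b.futNeqFree
  | .prev a => a.futNeqFree
  | .sinc a b => a.futNeqFree ∧ b.futNeqFree

/-- Every obligation occurring in the formula has test `⊤`. -/
def LRV.obligTop : LRV → Prop
  | .eqX _ _ _ => True
  | .futEq _ _ ψ => ψ = LRV.top
  | .futNeq _ _ ψ => ψ = LRV.top
  | .and a b => a.obligTop ∧ b.obligTop
  | .not a => a.obligTop
  | .next a => a.obligTop
  | .untl a b => a.obligTop ∧ b.obligTop
  | .prev a => a.obligTop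
  | .sinc a b => a.obligTop ∧ b.obligTop

/-- `const = G((k ≈ X k ∨ ¬X⊤) ∧ ⋀_{x ∈ vars(φ)} k ≉ x)`:
the variable `k` acts as a constant different from all variables of φ. -/
noncomputable def constF (k : ℕ) (φ : LRV) : LRV :=
  LRV.alG (.and
    (LRV.lor (.eqX k 1 k) (.not (.next LRV.top)))
    (lrvBigAnd ((φ.vars.sort (· ≤ ·)).map (fun x => LRV.neqX k 0 x))))

/-- `val_{y,ψ} = G(v_{y,ψ} ≈ k ∨ v_{y,ψ} ≈ y) ∧ G(v_{y,ψ} ≈ y ⇔ ψ)`. -/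
def valTop (k : ℕ) (v : ℕ → LRV → ℕ) (y : ℕ) (ψ : LRV) : LRV :=
  .and (LRV.alG (LRV.lor (.eqX (v y ψ) 0 k) (.eqX (v y ψ) 0 y)))
       (LRV.alG (LRV.liff (.eqX (v y ψ) 0 y) ψ))

/-- `φ^⊤`: replace every occurrence of `⟨x ≈ y? ψ⟩` by `⟨x ≈ v_{y,ψ}? ⊤⟩`. -/
def trTop (v : ℕ → LRV → ℕ) : LRV → LRV
  | .eqX x j y => .eqX x j y
  | .futEq x y ψ => .futEq x (v y ψ) LRV.top
  | .futNeq x y ψ => .futNeq x y ψ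
  | .and a b => .and (trTop v a) (trTop v b)
  | .not a => .not (trTop v a)
  | .next a => .next (trTop v a)
  | .untl a b => .untl (trTop v a) (trTop v b)
  | .prev a => .prev (trTop v a)
  | .sinc a b => .sinc (trTop v a) (trTop v b)

/-- The full translation `φ' = φ^⊤ ∧ const ∧ ⋀_{y,ψ} val_{y,ψ}`,
where `y` ranges over the variables of φ and `ψ` over the tests of φ. -/
noncomputable def trTopFull (k : ℕ) (v : ℕ → LRV → ℕ) (φ : LRV) : LRV :=
  .and (trTop v φ)
    (.and (constF k φ)
      (lrvBigAnd ((φ.vars.sort (· ≤ ·)).flatMap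
        (fun y => φ.tests.dedup.map (fun ψ => valTop k v y ψ)))))

section Aux

open Classical

lemma sat_top (σ : LRVModel) (i : ℕ) : LRVSat σ LRV.top i ↔ i < σ.length := by
  simp [LRV.top, LRVSat]

lemma sat_lor (σ : LRVModel) (a b : LRV) (i : ℕ) :
    LRVSat σ (LRV.lor a b) i ↔ LRVSat σ a i ∨ LRVSat σ b i := by
  simp only [LRV.lor, LRVSat]; tauto

lemma sat_limp (σ : LRVModel) (a b : LRV) (i : ℕ) :
    LRVSat σ (LRV.limp a b) i ↔ (LRVSat σ a i → LRVSat σ b i) := by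
  simp only [LRV.limp, sat_lor, LRVSat]; tauto

lemma sat_liff (σ : LRVModel) (a b : LRV) (i : ℕ) :
    LRVSat σ (LRV.liff a b) i ↔ (LRVSat σ a i ↔ LRVSat σ b i) := by
  show (LRVSat σ (LRV.limp a b) i ∧ LRVSat σ (LRV.limp b a) i) ↔ _
  rw [sat_limp, sat_limp]; tauto

lemma sat_alG (σ : LRVModel) (a : LRV) (i : ℕ) :
    LRVSat σ (LRV.alG a) i ↔ ∀ j, i ≤ j → j < σ.length → LRVSat σ a j := by
  show (¬ LRVSat σ (LRV.untl LRV.top (.not a)) i) ↔ _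
  constructor
  · intro h j hij hj
    by_contra hc
    exact h ⟨j, hij, hj, hc, fun l _ hl => (sat_top σ l).2 (hl.trans hj)⟩
  · rintro h ⟨j, hij, hj, hc, -⟩
    exact hc (h j hij hj)

lemma sat_bigAnd (σ : LRVModel) (l : List LRV) (i : ℕ) :
    LRVSat σ (lrvBigAnd l) i ↔ i < σ.length ∧ ∀ χ ∈ l, LRVSat σ χ i := by
  induction l with
  | nil => simp [lrvBigAnd, sat_top σ i]
  | cons a t ih =>
    show (LRVSat σ a i ∧ LRVSat σ (lrvBigAnd t) i) ↔ _
    rw [ih]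
    simp only [List.mem_cons]
    constructor
    · rintro ⟨h1, h2, h3⟩
      exact ⟨h2, fun χ hχ => by rcases hχ with rfl | hχ; exact h1; exact h3 χ hχ⟩
    · rintro ⟨h1, h2⟩
      exact ⟨h2 a (Or.inl rfl), h1, fun χ hχ => h2 χ (Or.inr hχ)⟩

lemma tests_vars : ∀ φ : LRV, ∀ ψ ∈ φ.tests, ψ.vars ⊆ φ.vars := by
  intro φ
  induction φ with
  | eqX x j y => simp [LRV.tests]
  | futEq x y ψ ih =>
    intro t ht
    rcases (List.mem_cons).1 ht with rfl | ht
    · intro a haa; simp [LRV.vars]; tauto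
    · intro a haa
      have := ih t ht haa
      simp [LRV.vars]; tauto
  | futNeq x y ψ ih =>
    intro t ht
    rcases (List.mem_cons).1 ht with rfl | ht
    · intro a haa; simp [LRV.vars]; tauto
    · intro a haa
      have := ih t ht haa
      simp [LRV.vars]; tauto
  | and a b iha ihb =>
    intro t ht
    rcases (List.mem_append).1 ht with ht | ht
    · exact (iha t ht).trans Finset.subset_union_left
    · exact (ihb t ht).trans Finset.subset_union_right
  | not a iha => exact iha
  | next a iha => exact iha
  | untl a b iha ihb =>
    intro t ht
    rcases (List.mem_append).1 ht with ht | ht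
    · exact (iha t ht).trans Finset.subset_union_left
    · exact (ihb t ht).trans Finset.subset_union_right
  | prev a iha => exact iha
  | sinc a b iha ihb =>
    intro t ht
    rcases (List.mem_append).1 ht with ht | ht
    · exact (iha t ht).trans Finset.subset_union_left
    · exact (ihb t ht).trans Finset.subset_union_right

lemma lemB (σ σφ : LRVModel) (hlen : σφ.length = σ.length)
    (S : Finset ℕ) (hagree : ∀ i, ∀ x ∈ S, mval σφ i x = mval σ i x) :
    ∀ χ : LRV, χ.obligFree → χ.vars ⊆ S → ∀ i, LRVSat σ χ i ↔ LRVSat σφ χ i := by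
  intro χ
  induction χ with
  | eqX x j y =>
    intro _ hsub i
    have hx : x ∈ S := hsub (by simp [LRV.vars])
    have hy : y ∈ S := hsub (by simp [LRV.vars])
    have hbx : ∀ i, mval σφ i x = mval σ i x := fun i => hagree i x hx
    have hby : ∀ i, mval σφ i y = mval σ i y := fun i => hagree i y hy
    simp only [LRVSat, hlen, hbx, hby]
  | futEq x y ψ ih => intro h; exact absurd h (by simp [LRV.obligFree])
  | futNeq x y ψ ih => intro h; exact absurd h (by simp [LRV.obligFree])
  | and a b iha ihb =>
    intro h hsub i
    have Ha := iha h.1 ((Finset.subset_union_left).trans hsub)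
    have Hb := ihb h.2 ((Finset.subset_union_right).trans hsub)
    simp only [LRVSat, Ha, Hb]
  | not a iha =>
    intro h hsub i
    have Ha := iha h hsub
    simp only [LRVSat, Ha]
  | next a iha =>
    intro h hsub i
    have Ha := iha h hsub
    simp only [LRVSat, Ha, hlen]
  | untl a b iha ihb =>
    intro h hsub i
    have Ha := iha h.1 ((Finset.subset_union_left).trans hsub)
    have Hb := ihb h.2 ((Finset.subset_union_right).trans hsub)
    simp only [LRVSat, Ha, Hb, hlen]
  | prev a iha =>
    intro h hsub i
    have Ha := iha h hsub
    simp only [LRVSat, Ha]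
  | sinc a b iha ihb =>
    intro h hsub i
    have Ha := iha h.1 ((Finset.subset_union_left).trans hsub)
    have Hb := ihb h.2 ((Finset.subset_union_right).trans hsub)
    simp only [LRVSat, Ha, Hb, hlen]

lemma lemA (φ : LRV) (v : ℕ → LRV → ℕ) (σ σφ : LRVModel) (d : ℕ)
    (ha : σφ.length = σ.length)
    (hb : ∀ i, ∀ x ∈ φ.vars, mval σφ i x = mval σ i x)
    (hc₁ : ∀ i < σ.length, ∀ x ∈ φ.vars, mval σ i x ≠ d)
    (hd : ∀ i < σ.length, ∀ y ∈ φ.vars, ∀ ψ ∈ φ.tests,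
      (LRVSat σ ψ i → mval σφ i (v y ψ) = mval σφ i y) ∧
      (¬ LRVSat σ ψ i → mval σφ i (v y ψ) = d)) :
    ∀ χ : LRV, χ.futNeqFree → χ.vars ⊆ φ.vars → (∀ t ∈ χ.tests, t ∈ φ.tests) →
      ∀ i, LRVSat σ χ i ↔ LRVSat σφ (trTop v χ) i := by
  intro χ
  induction χ with
  | eqX x j y =>
    intro _ hsub _ i
    have hx : x ∈ φ.vars := hsub (by simp [LRV.vars])
    have hy : y ∈ φ.vars := hsub (by simp [LRV.vars])
    have hbx : ∀ i, mval σφ i x = mval σ i x := fun i => hb i x hx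
    have hby : ∀ i, mval σφ i y = mval σ i y := fun i => hb i y hy
    simp only [trTop, LRVSat, ha, hbx, hby]
  | futEq x y ψ ih =>
    intro _ hsub htst i
    have hx : x ∈ φ.vars := hsub (by simp [LRV.vars])
    have hy : y ∈ φ.vars := hsub (by simp [LRV.vars])
    have hψ : ψ ∈ φ.tests := htst ψ (by simp [LRV.tests])
    simp only [trTop, LRVSat]
    constructor
    · rintro ⟨j, hij, hjlen, heq, hsatψ⟩
      refine ⟨j, hij, by omega, ?_, (sat_top σφ j).2 (by omega)⟩
      have h1 := (hd j hjlen y hy ψ hψ).1 hsatψ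
      rw [hb i x hx, heq, h1, hb j y hy]
    · rintro ⟨j, hij, hjlen, heq, -⟩
      have hjσ : j < σ.length := by omega
      by_cases hsat : LRVSat σ ψ j
      · refine ⟨j, hij, hjσ, ?_, hsat⟩
        have h1 := (hd j hjσ y hy ψ hψ).1 hsat
        rw [← hb i x hx, heq, h1, hb j y hy]
      · exfalso
        have h1 := (hd j hjσ y hy ψ hψ).2 hsat
        exact hc₁ i (lt_trans hij hjσ) x hx (by rw [← hb i x hx, heq, h1])
  | futNeq x y ψ ih => intro h; exact absurd h (by simp [LRV.futNeqFree])
  | and a b iha ihb =>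
    intro h hsub ht i
    have Ha := iha h.1 ((Finset.subset_union_left).trans hsub)
      (fun t ht' => ht t (List.mem_append.2 (Or.inl ht')))
    have Hb := ihb h.2 ((Finset.subset_union_right).trans hsub)
      (fun t ht' => ht t (List.mem_append.2 (Or.inr ht')))
    simp only [trTop, LRVSat, Ha, Hb]
  | not a iha =>
    intro h hsub ht i
    have Ha := iha h hsub ht
    simp only [trTop, LRVSat, Ha]
  | next a iha =>
    intro h hsub ht i
    have Ha := iha h hsub ht
    simp only [trTop, LRVSat, Ha, ha]
  | untl a b iha ihb =>
    intro h hsub ht i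
    have Ha := iha h.1 ((Finset.subset_union_left).trans hsub)
      (fun t ht' => ht t (List.mem_append.2 (Or.inl ht')))
    have Hb := ihb h.2 ((Finset.subset_union_right).trans hsub)
      (fun t ht' => ht t (List.mem_append.2 (Or.inr ht')))
    simp only [trTop, LRVSat, Ha, Hb, ha]
  | prev a iha =>
    intro h hsub ht i
    have Ha := iha h hsub ht
    simp only [trTop, LRVSat, Ha]
  | sinc a b iha ihb =>
    intro h hsub ht i
    have Ha := iha h.1 ((Finset.subset_union_left).trans hsub)
      (fun t ht' => ht t (List.mem_append.2 (Or.inl ht')))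
    have Hb := ihb h.2 ((Finset.subset_union_right).trans hsub)
      (fun t ht' => ht t (List.mem_append.2 (Or.inr ht')))
    simp only [trTop, LRVSat, Ha, Hb, ha]

end Aux

/-- With φ, const, val_{y,ψ}, φ^⊤ and φ' as in the translation of LRV without
≉-obligations into LRV with ⊤-tests, let σ be any model and σ_φ any model satisfying conditions
(a)–(d).  Then `σ ⊨ φ` iff `σ_φ ⊨ φ'`. -/
theorem lrv_trTop_model_correspondence (φ : LRV) (k : ℕ) (v : ℕ → LRV → ℕ)
    (hNoNeq : φ.futNeqFree)
    (hTests : ∀ ψ ∈ φ.tests, ψ.obligFree)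
    (hk : k ∉ φ.vars)
    (hv : ∀ y ∈ φ.vars, ∀ ψ ∈ φ.tests, v y ψ ∉ φ.vars ∧ v y ψ ≠ k)
    (hvinj : ∀ y ∈ φ.vars, ∀ ψ ∈ φ.tests, ∀ y' ∈ φ.vars, ∀ ψ' ∈ φ.tests,
      v y ψ = v y' ψ' → y = y' ∧ ψ = ψ')
    (σ σφ : LRVModel) (hσ : σ ≠ [])
    -- (a) same length
    (ha : σφ.length = σ.length)
    -- (b) σφ agrees with σ on the variables of φ
    (hb : ∀ i < σ.length, ∀ x ∈ φ.vars, mval σφ i x = mval σ i x)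
    -- (c) a data value d outside {σ(i)(x) : x ∈ vars(φ), i < |σ|}, constantly held by k in σφ
    (d : ℕ)
    (hc₁ : ∀ i < σ.length, ∀ x ∈ φ.vars, mval σ i x ≠ d)
    (hc₂ : ∀ i < σ.length, mval σφ i k = d)
    -- (d) v_{y,ψ} holds the value of y where σ,i ⊨ ψ, and d elsewhere
    (hd : ∀ i < σ.length, ∀ y ∈ φ.vars, ∀ ψ ∈ φ.tests,
      (LRVSat σ ψ i → mval σφ i (v y ψ) = mval σφ i y) ∧
      (¬ LRVSat σ ψ i → mval σφ i (v y ψ) = d)) :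
    LRVSat σ φ 0 ↔ LRVSat σφ (trTopFull k v φ) 0 := by
  classical
  have hσlen : 0 < σ.length := List.length_pos_iff.2 hσ
  have hbAll : ∀ i, ∀ x ∈ φ.vars, mval σφ i x = mval σ i x := by
    intro i x hx
    by_cases hi : i < σ.length
    · exact hb i hi x hx
    · push_neg at hi
      simp [mval, List.getD_eq_getElem?_getD,
            List.getElem?_eq_none (show σ.length ≤ i from hi),
            List.getElem?_eq_none (show σφ.length ≤ i by omega)]
  have HA := lemA φ v σ σφ d ha hbAll hc₁ hd φ hNoNeq subset_rfl (fun t ht => ht) 0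
  -- const holds in σφ
  have hconst : LRVSat σφ (constF k φ) 0 := by
    rw [constF, sat_alG]
    intro j _ hj
    have hjσ : j < σ.length := by omega
    refine ⟨?_, ?_⟩
    · rw [sat_lor]
      by_cases hj1 : j + 1 < σφ.length
      · exact Or.inl ⟨hj1, by rw [hc₂ j hjσ, hc₂ (j+1) (by omega)]⟩
      · refine Or.inr ?_
        show ¬ LRVSat σφ (LRV.next LRV.top) j
        rintro ⟨hlt, -⟩
        exact hj1 hlt
    · rw [sat_bigAnd]
      refine ⟨hj, ?_⟩
      intro χ hχ
      simp only [List.mem_map] at hχ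
      obtain ⟨x, hx, rfl⟩ := hχ
      have hxv : x ∈ φ.vars := (Finset.mem_sort _).1 hx
      refine ⟨?_, (sat_top σφ j).2 hj⟩
      rintro ⟨-, heq⟩
      simp only [Nat.add_zero] at heq
      rw [hc₂ j hjσ, hbAll j x hxv] at heq
      exact hc₁ j hjσ x hxv heq.symm
  -- val holds in σφ
  have hval : ∀ y ∈ φ.vars, ∀ ψ ∈ φ.tests, LRVSat σφ (valTop k v y ψ) 0 := by
    intro y hy ψ hψ
    have hψvars : ψ.vars ⊆ φ.vars := tests_vars φ ψ hψ
    have hψiff : ∀ j, LRVSat σ ψ j ↔ LRVSat σφ ψ j :=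
      lemB σ σφ ha φ.vars hbAll ψ (hTests ψ hψ) hψvars
    refine ⟨?_, ?_⟩
    · rw [sat_alG]
      intro j _ hj
      have hjσ : j < σ.length := by omega
      rw [sat_lor]
      by_cases hsat : LRVSat σ ψ j
      · exact Or.inr ⟨by omega, by
          simp only [Nat.add_zero]
          exact (hd j hjσ y hy ψ hψ).1 hsat⟩
      · exact Or.inl ⟨by omega, by
          simp only [Nat.add_zero]
          rw [(hd j hjσ y hy ψ hψ).2 hsat, hc₂ j hjσ]⟩
    · rw [sat_alG]
      intro j _ hj
      have hjσ : j < σ.length := by omega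
      rw [sat_liff]
      constructor
      · rintro ⟨-, heq⟩
        simp only [Nat.add_zero] at heq
        by_cases hsat : LRVSat σ ψ j
        · exact (hψiff j).1 hsat
        · exfalso
          rw [(hd j hjσ y hy ψ hψ).2 hsat, hbAll j y hy] at heq
          exact hc₁ j hjσ y hy heq.symm
      · intro hsatφ
        have hsat := (hψiff j).2 hsatφ
        refine ⟨by omega, ?_⟩
        simp only [Nat.add_zero]
        exact (hd j hjσ y hy ψ hψ).1 hsat
  have hbig : LRVSat σφ (lrvBigAnd ((φ.vars.sort (· ≤ ·)).flatMap
      (fun y => φ.tests.dedup.map (fun ψ => valTop k v y ψ)))) 0 := by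
    rw [sat_bigAnd]
    refine ⟨by omega, ?_⟩
    intro χ hχ
    simp only [List.mem_flatMap, List.mem_map] at hχ
    obtain ⟨y, hy, ψ, hψ, rfl⟩ := hχ
    exact hval y ((Finset.mem_sort _).1 hy) ψ (List.mem_dedup.1 hψ)
  constructor
  · intro hφ
    exact ⟨HA.1 hφ, hconst, hbig⟩
  · rintro ⟨h1, -, -⟩
    exact HA.2 h1
end

section
/- Let φ be an LRV formula over variables x_1, …, x_k whose atomic formulas are of the forms x_i ≈ X^ℓ x_j, x_i ≉ X^ℓ x_j and ⟨x_i ≈ x_j? ⊤⟩, and let k' = 2k+1. Using a single variable x, define: segment-k' = ⋀_{0≤j≤k'−1, j even} x ≈ X^j x ∧ ⋀_{0≤j≤k'−1, j odd} x ≉ X^j x ∧ (¬X^{k'}⊤ ∨ x ≈ X^{k'} x); many-segments = segment-k' ∧ G((x ≈ X x) ⇒ X segment-k'); γ_j = (X^{k'−2j} x ≈ X^{k'−2j+1} x) ∨ (X^{k'−2j}⊤ ∧ ¬X^{k'−2j+1}⊤) for each j ∈ {1,…,k}; and ξ_{i,j} = X^{2i−1}⟨x ≈ x? γ_j⟩.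 Define the translation tr by: tr is homomorphic on Boolean connectives; tr(X ψ) = X^{k'} tr(ψ); tr(X⁻¹ ψ) = (X⁻¹)^{k'} tr(ψ); tr(ψ U ψ') = (segment-k' ⇒ tr(ψ)) U (segment-k' ∧ tr(ψ')); tr(ψ S ψ') = (segment-k' ⇒ tr(ψ)) S (segment-k' ∧ tr(ψ')); tr(x_i ≈ X^ℓ x_j) = X^{2i−1} x ≈ X^{ℓ·k'+2j−1} x and tr(x_i ≉ X^ℓ x_j) is its negation conjoined with X^{ℓ·k'+2j−1}⊤; tr(⟨x_i ≈ x_j? ⊤⟩) = (tr(x_i ≈ x_j) ∧ ξ_{j,j}) ∨ (tr(x_i ≉ x_j) ∧ ξ_{i,j}). Then φ is satisfiable if and only if the one-variable LRV formula many-segments ∧ tr(φ) is satisfiable. -/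
/-- Source syntax: LRV formulas over the variables `x_1, …, x_k` whose atomic formulas are of
the forms `x_i ≈ X^ℓ x_j`, `x_i ≉ X^ℓ x_j` and `⟨x_i ≈ x_j? ⊤⟩` (the index `i : Fin k`
stands for the variable `x_{i+1}`). -/
inductive SrcF (k : ℕ) : Type
  | eq : Fin k → ℕ → Fin k → SrcF k      -- x_i ≈ X^ℓ x_j
  | neq : Fin k → ℕ → Fin k → SrcF k     -- x_i ≉ X^ℓ x_j
  | oblig : Fin k → Fin k → SrcF k       -- ⟨x_i ≈ x_j? ⊤⟩
  | and : SrcF k → SrcF k → SrcF k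
  | not : SrcF k → SrcF k
  | next : SrcF k → SrcF k
  | prev : SrcF k → SrcF k
  | untl : SrcF k → SrcF k → SrcF k
  | sinc : SrcF k → SrcF k → SrcF k

/-- The source formula read as an LRV formula (variable `x_{i+1}` is the LRV variable `i`). -/
def SrcF.toLRV {k : ℕ} : SrcF k → LRV
  | .eq i l j => .eqX (i : ℕ) l (j : ℕ)
  | .neq i l j => LRV.neqX (i : ℕ) l (j : ℕ)
  | .oblig i j => .futEq (i : ℕ) (j : ℕ) LRV.top
  | .and a b => .and a.toLRV b.toLRV
  | .not a => .not a.toLRV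
  | .next a => .next a.toLRV
  | .prev a => .prev a.toLRV
  | .untl a b => .untl a.toLRV b.toLRV
  | .sinc a b => .sinc a.toLRV b.toLRV

/-- `X^a x ≈ X^b x` (for the single variable `x`, which is variable `0`):
abbreviates `X^{min a b}(x ≈ X^{max a b − min a b} x)`. -/
def eqAt (a b : ℕ) : LRV := LRV.nextn (min a b) (.eqX 0 (max a b - min a b) 0)

/-- `segment-k' = ⋀_{0≤j≤k'−1, j even} x ≈ X^j x ∧ ⋀_{0≤j≤k'−1, j odd} x ≉ X^j x ∧
(¬X^{k'}⊤ ∨ x ≈ X^{k'} x)`, where `k' = 2k+1`. -/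
def segF (k : ℕ) : LRV :=
  .and (lrvBigAnd ((List.range (2 * k + 1)).map
          (fun j => if j % 2 = 0 then LRV.eqX 0 j 0 else LRV.neqX 0 j 0)))
       (LRV.lor (.not (LRV.nextn (2 * k + 1) LRV.top)) (.eqX 0 (2 * k + 1) 0))

/-- `many-segments = segment-k' ∧ G((x ≈ X x) ⇒ X segment-k')`. -/
def manySegF (k : ℕ) : LRV :=
  .and (segF k) (LRV.alG (LRV.limp (.eqX 0 1 0) (.next (segF k))))

/-- `γ_j = (X^{k'−2j} x ≈ X^{k'−2j+1} x) ∨ (X^{k'−2j}⊤ ∧ ¬X^{k'−2j+1}⊤)` (j is 1-based). -/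
def gamF (k j : ℕ) : LRV :=
  LRV.lor (LRV.nextn (2 * k + 1 - 2 * j) (.eqX 0 1 0))
          (.and (LRV.nextn (2 * k + 1 - 2 * j) LRV.top)
                (.not (LRV.nextn (2 * k + 1 - 2 * j + 1) LRV.top)))

/-- `ξ_{i,j} = X^{2i−1}⟨x ≈ x? γ_j⟩` (i and j are 1-based). -/
def xiF (k i j : ℕ) : LRV := LRV.nextn (2 * i - 1) (.futEq 0 0 (gamF k j))

/-- The translation `tr` into one-variable LRV formulas. -/
def trOne {k : ℕ} : SrcF k → LRV
  | .eq i l j => eqAt (2 * (i : ℕ) + 1) (l * (2 * k + 1) + 2 * (j : ℕ) + 1)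
  | .neq i l j =>
      .and (.not (eqAt (2 * (i : ℕ) + 1) (l * (2 * k + 1) + 2 * (j : ℕ) + 1)))
           (LRV.nextn (l * (2 * k + 1) + 2 * (j : ℕ) + 1) LRV.top)
  | .oblig i j =>
      LRV.lor
        (.and (eqAt (2 * (i : ℕ) + 1) (2 * (j : ℕ) + 1)) (xiF k ((j : ℕ) + 1) ((j : ℕ) + 1)))
        (.and (.and (.not (eqAt (2 * (i : ℕ) + 1) (2 * (j : ℕ) + 1)))
                    (LRV.nextn (2 * (j : ℕ) + 1) LRV.top))
              (xiF k ((i : ℕ) + 1) ((j : ℕ) + 1)))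
  | .and a b => .and (trOne a) (trOne b)
  | .not a => .not (trOne a)
  | .next a => LRV.nextn (2 * k + 1) (trOne a)
  | .prev a => LRV.prevn (2 * k + 1) (trOne a)
  | .untl a b => .untl (LRV.limp (segF k) (trOne a)) (.and (segF k) (trOne b))
  | .sinc a b => .sinc (LRV.limp (segF k) (trOne a)) (.and (segF k) (trOne b))


/-!
A model `σ` over `x_1, …, x_k` is encoded by a one-variable model of length `|σ| · (2k+1)`:
position `n` of `σ` becomes the block of positions `n(2k+1), …, n(2k+1) + 2k`, whose even offsets
carry `0` and whose offset `2i+1` carries `σ(n)(x_{i+1}) + 1`. The alternation of equal and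
distinct values makes the block starts exactly the positions satisfying `segment-k'`, and
`many-segments` forces every model to be cut into such blocks, so the one-variable models of
`many-segments` are exactly the encodings. Along an encoding, `tr(ψ)` holds at the start of block
`n` iff `ψ` holds at `n`: temporal steps jump by whole blocks, until and since only look at block
starts, and `γ_j` holds exactly at the offsets `2j-1`, because from there the next place where
`x ≈ X x` holds (or the model ends) is the last offset of the block.
-/

section Semantics

variable {σ : LRVModel}

@[simp] lemma lrvSat_top {p : ℕ} : LRVSat σ LRV.top p ↔ p < σ.length := by
  simp [LRV.top, LRVSat]

@[simp] lemma lrvSat_lor {a b : LRV} {p : ℕ} :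
    LRVSat σ (a.lor b) p ↔ LRVSat σ a p ∨ LRVSat σ b p := by
  simp only [LRV.lor, LRVSat]
  tauto

@[simp] lemma lrvSat_limp {a b : LRV} {p : ℕ} :
    LRVSat σ (a.limp b) p ↔ (LRVSat σ a p → LRVSat σ b p) := by
  simp only [LRV.limp, lrvSat_lor, LRVSat]
  tauto

lemma lrvSat_alG {ψ : LRV} {p : ℕ} :
    LRVSat σ ψ.alG p ↔ ∀ q, p ≤ q → q < σ.length → LRVSat σ ψ q := by
  simp only [LRV.alG, LRV.evF, LRVSat, lrvSat_top]
  constructor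
  · intro h q hpq hq
    by_contra hψ
    exact h ⟨q, hpq, hq, hψ, fun l _ hl => hl.trans hq⟩
  · rintro h ⟨q, hpq, hq, hψ, -⟩
    exact hψ (h q hpq hq)

lemma lrvSat_nextn {ψ : LRV} {n p : ℕ} :
    LRVSat σ (LRV.nextn n ψ) p ↔ (0 < n → p + n < σ.length) ∧ LRVSat σ ψ (p + n) := by
  induction n generalizing p with
  | zero => simp [LRV.nextn]
  | succ m ih =>
    simp only [LRV.nextn, LRVSat, ih, show p + 1 + m = p + (m + 1) by omega]
    constructor
    · rintro ⟨h1, h2, hψ⟩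
      refine ⟨fun _ => ?_, hψ⟩
      rcases m.eq_zero_or_pos with rfl | hm
      exacts [h1, h2 hm]
    · rintro ⟨h, hψ⟩
      have := h m.succ_pos
      exact ⟨by omega, fun _ => this, hψ⟩

@[simp] lemma lrvSat_nextn_top {n p : ℕ} :
    LRVSat σ (LRV.nextn n LRV.top) p ↔ p + n < σ.length := by
  simp only [lrvSat_nextn, lrvSat_top]
  exact and_iff_right_of_imp fun h _ => h

lemma lrvSat_prevn {ψ : LRV} {n p : ℕ} :
    LRVSat σ (LRV.prevn n ψ) p ↔ n ≤ p ∧ LRVSat σ ψ (p - n) := by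
  induction n generalizing p with
  | zero => simp [LRV.prevn]
  | succ m ih =>
    simp only [LRV.prevn, LRVSat, ih, show p - 1 - m = p - (m + 1) by omega, ← and_assoc]
    exact and_congr_left fun _ => by omega

lemma lrvSat_lrvBigAnd {l : List LRV} {p : ℕ} :
    LRVSat σ (lrvBigAnd l) p ↔ p < σ.length ∧ ∀ ψ ∈ l, LRVSat σ ψ p := by
  induction l with
  | nil => simp [lrvBigAnd]
  | cons a t ih =>
    simp only [lrvBigAnd, List.foldr_cons, LRVSat, List.forall_mem_cons] at ih ⊢
    rw [ih]
    tauto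

lemma eqAt_comm (a b : ℕ) : eqAt a b = eqAt b a := by
  simp only [eqAt, min_comm, max_comm]

lemma lrvSat_eqAt {a b p : ℕ} : LRVSat σ (eqAt a b) p ↔
    p + a < σ.length ∧ p + b < σ.length ∧ mval σ (p + a) 0 = mval σ (p + b) 0 := by
  wlog hab : a ≤ b generalizing a b
  · rw [eqAt_comm, this (le_of_not_ge hab), eq_comm]
    tauto
  simp only [eqAt, min_eq_left hab, max_eq_right hab, lrvSat_nextn, LRVSat,
    show p + a + (b - a) = p + b by omega]
  constructor
  · rintro ⟨-, hb, he⟩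
    exact ⟨by omega, hb, he⟩
  · rintro ⟨ha, hb, he⟩
    exact ⟨fun _ => ha, hb, he⟩

end Semantics

lemma Nat.mul_add_lt_mul_add_iff {K n m r s : ℕ} (hr : r < K) (hs : s < K) :
    n * K + r < m * K + s ↔ n < m ∨ n = m ∧ r < s := by
  constructor
  · intro h
    rcases lt_trichotomy n m with hnm | rfl | hnm
    · exact .inl hnm
    · exact .inr ⟨rfl, by omega⟩
    · nlinarith
  · rintro (hnm | ⟨rfl, h⟩)
    · nlinarith
    · omega

lemma Nat.mul_add_lt_mul_iff {K n m r : ℕ} (hr : r < K) : n * K + r < m * K ↔ n < m := by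
  simpa using Nat.mul_add_lt_mul_add_iff (m := m) (s := 0) hr (by omega)

lemma Nat.exists_eq_mul_add_of_lt_mul {K N p : ℕ} (h : p < N * K) :
    ∃ n < N, ∃ o < K, p = n * K + o := by
  have hK : 0 < K := Nat.pos_of_mul_pos_left (Nat.zero_lt_of_lt h)
  have hp := Nat.div_add_mod' p K
  exact ⟨p / K, (Nat.mul_add_lt_mul_iff (Nat.mod_lt p hK)).1 (by rwa [hp]), p % K,
    Nat.mod_lt p hK, hp.symm⟩

structure IsSegment (σ : LRVModel) (k q : ℕ) : Prop where
  lt_length : q + 2 * k < σ.length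
  eq_iff : ∀ j ≤ 2 * k, mval σ q 0 = mval σ (q + j) 0 ↔ j % 2 = 0
  eq_of_lt_length : q + (2 * k + 1) < σ.length → mval σ q 0 = mval σ (q + (2 * k + 1)) 0

lemma lrvSat_segF {σ : LRVModel} {k q : ℕ} : LRVSat σ (segF k) q ↔ IsSegment σ k q := by
  have hconj : ∀ j, LRVSat σ (if j % 2 = 0 then LRV.eqX 0 j 0 else LRV.neqX 0 j 0) q ↔
      q + j < σ.length ∧ (mval σ q 0 = mval σ (q + j) 0 ↔ j % 2 = 0) := by
    intro j
    split_ifs with hj <;> simp only [LRV.neqX, LRVSat, lrvSat_nextn_top, hj] <;> tauto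
  simp only [segF, LRVSat, lrvSat_lrvBigAnd, List.forall_mem_map, List.mem_range, hconj,
    lrvSat_lor, lrvSat_nextn_top]
  constructor
  · rintro ⟨⟨-, h⟩, hnext⟩
    exact ⟨(h (2 * k) (by omega)).1, fun j hj => (h j (by omega)).2,
      fun hlt => (hnext.resolve_left (not_not.2 hlt)).2⟩
  · rintro ⟨hlt, heq, hnext⟩
    refine ⟨⟨by omega, fun j hj => ⟨by omega, heq j (by omega)⟩⟩, ?_⟩
    by_cases h : q + (2 * k + 1) < σ.length
    · exact .inr ⟨h, hnext h⟩
    · exact .inl h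

lemma IsSegment.ne_succ {σ : LRVModel} {k q o : ℕ} (h : IsSegment σ k q) (ho : o < 2 * k) :
    mval σ (q + o) 0 ≠ mval σ (q + o + 1) 0 := by
  intro he
  have h1 := h.eq_iff o ho.le
  have h2 := h.eq_iff (o + 1) ho
  rw [← add_assoc, ← he] at h2
  omega

lemma IsSegment.last_eq_next {σ : LRVModel} {k q : ℕ} (h : IsSegment σ k q)
    (hq : q + 2 * k + 1 < σ.length) : mval σ (q + 2 * k) 0 = mval σ (q + 2 * k + 1) 0 :=
  ((h.eq_iff (2 * k) le_rfl).2 (by omega)).symm.trans (h.eq_of_lt_length (by omega))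

/-- Offset `2i+1` of block `n` stands for variable `i` at position `n` of `σ`; only the
equalities between values are recorded, not the values themselves. -/
structure IsBlockEncoding (k : ℕ) (σ σ' : LRVModel) : Prop where
  length_eq : σ'.length = σ.length * (2 * k + 1)
  isSegment : ∀ n < σ.length, IsSegment σ' k (n * (2 * k + 1))
  slot_eq_iff : ∀ {n n' i j}, n < σ.length → n' < σ.length → i < k → j < k →
    (mval σ' (n * (2 * k + 1) + (2 * i + 1)) 0 = mval σ' (n' * (2 * k + 1) + (2 * j + 1)) 0 ↔
      mval σ n i = mval σ n' j)

def BlockAgree (k : ℕ) (σ σ' : LRVModel) (A' A : LRV) : Prop :=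
  ∀ n < σ.length, LRVSat σ' A' (n * (2 * k + 1)) ↔ LRVSat σ A n

namespace IsBlockEncoding

variable {k : ℕ} {σ σ' : LRVModel}

lemma lt_length_iff (G : IsBlockEncoding k σ σ') {n r : ℕ} (hr : r < 2 * k + 1) :
    n * (2 * k + 1) + r < σ'.length ↔ n < σ.length := by
  rw [G.length_eq]
  exact Nat.mul_add_lt_mul_iff hr

lemma mul_lt_length_iff (G : IsBlockEncoding k σ σ') {n : ℕ} :
    n * (2 * k + 1) < σ'.length ↔ n < σ.length := by
  simpa using G.lt_length_iff (n := n) (r := 0) (by omega)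

lemma succ_eq_iff (G : IsBlockEncoding k σ σ') {p : ℕ} (hp : p + 1 < σ'.length) :
    mval σ' p 0 = mval σ' (p + 1) 0 ↔ p % (2 * k + 1) = 2 * k := by
  obtain ⟨n, hn, o, ho, rfl⟩ :=
    Nat.exists_eq_mul_add_of_lt_mul (G.length_eq ▸ hp.trans' p.lt_succ_self)
  rw [Nat.mul_add_mod_of_lt ho]
  rcases (show o < 2 * k ∨ o = 2 * k by omega) with ho' | rfl
  · exact iff_of_false ((G.isSegment n hn).ne_succ ho') (by omega)
  · exact iff_of_true ((G.isSegment n hn).last_eq_next hp) rfl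

lemma lrvSat_segF_mul (G : IsBlockEncoding k σ σ') {m : ℕ} (hm : m < σ.length) :
    LRVSat σ' (segF k) (m * (2 * k + 1)) :=
  lrvSat_segF.2 (G.isSegment m hm)

lemma lrvSat_segF_iff (G : IsBlockEncoding k σ σ') {q : ℕ} (hq : q < σ'.length) :
    LRVSat σ' (segF k) q ↔ ∃ m < σ.length, q = m * (2 * k + 1) := by
  refine ⟨fun hseg => ?_, fun ⟨m, hm, hqm⟩ => hqm ▸ G.lrvSat_segF_mul hm⟩
  have S := lrvSat_segF.1 hseg
  obtain ⟨n, hn, o, ho, rfl⟩ := Nat.exists_eq_mul_add_of_lt_mul (G.length_eq ▸ hq)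
  rcases Nat.eq_zero_or_pos o with rfl | ho0
  · exact ⟨n, hn, rfl⟩
  -- inside a block, the last offset `2k` is followed by an equal value, which the segment forbids
  have hlt := S.lt_length
  have hlast : mval σ' (n * (2 * k + 1) + 2 * k) 0 = mval σ' (n * (2 * k + 1) + 2 * k + 1) 0 :=
    (G.succ_eq_iff (by omega)).2 (Nat.mul_add_mod_of_lt (by omega))
  have hne := S.ne_succ (o := 2 * k - o) (by omega)
  rw [show n * (2 * k + 1) + o + (2 * k - o) = n * (2 * k + 1) + 2 * k by omega] at hne
  exact (hne hlast).elim

lemma lrvSat_gamF_iff (G : IsBlockEncoding k σ σ') {q j : ℕ} (hj : j < k) :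
    LRVSat σ' (gamF k (j + 1)) q ↔ ∃ m < σ.length, q = m * (2 * k + 1) + (2 * j + 1) := by
  simp only [gamF, show 2 * k + 1 - 2 * (j + 1) = 2 * k - (2 * j + 1) by omega, lrvSat_lor,
    lrvSat_nextn_top, LRVSat]
  simp only [lrvSat_nextn, LRVSat]
  set d := 2 * k - (2 * j + 1)
  constructor
  · intro h
    have hlt : q + d < σ'.length := by rcases h with ⟨-, h, -⟩ | ⟨h, -⟩ <;> omega
    obtain ⟨m, hm, o, ho, hqo⟩ := Nat.exists_eq_mul_add_of_lt_mul (G.length_eq ▸ hlt)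
    suffices o = 2 * k from ⟨m, hm, by omega⟩
    rcases h with ⟨-, hlt1, heq⟩ | ⟨-, hend⟩
    · have hmod := (G.succ_eq_iff hlt1).1 heq
      rwa [hqo, Nat.mul_add_mod_of_lt ho] at hmod
    · have hfull := Nat.mul_le_mul_right (2 * k + 1) (Nat.succ_le_of_lt hm)
      rw [Nat.succ_mul, ← G.length_eq] at hfull
      omega
  · rintro ⟨m, hm, rfl⟩
    rw [show m * (2 * k + 1) + (2 * j + 1) + d = m * (2 * k + 1) + 2 * k by omega]
    by_cases hend : m * (2 * k + 1) + 2 * k + 1 < σ'.length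
    · exact .inl ⟨fun _ => by omega, hend,
        (G.succ_eq_iff hend).2 (Nat.mul_add_mod_of_lt (by omega))⟩
    · exact .inr ⟨(G.lt_length_iff (r := 2 * k) (by omega)).2 hm, by omega⟩

lemma lrvSat_xiF_iff (G : IsBlockEncoding k σ σ') {n i j : ℕ} (hn : n < σ.length) (hi : i < k)
    (hj : j < k) :
    LRVSat σ' (xiF k (i + 1) (j + 1)) (n * (2 * k + 1)) ↔
      ∃ m < σ.length, n * (2 * k + 1) + (2 * i + 1) < m * (2 * k + 1) + (2 * j + 1) ∧
        mval σ n i = mval σ m j := by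
  simp only [xiF, show 2 * (i + 1) - 1 = 2 * i + 1 by omega, lrvSat_nextn, LRVSat]
  constructor
  · rintro ⟨-, q, hpq, hq, heq, hγ⟩
    obtain ⟨m, hm, rfl⟩ := (G.lrvSat_gamF_iff hj).1 hγ
    exact ⟨m, hm, hpq, (G.slot_eq_iff hn hm hi hj).1 heq⟩
  · rintro ⟨m, hm, hlt, heq⟩
    have hq : m * (2 * k + 1) + (2 * j + 1) < σ'.length := (G.lt_length_iff (by omega)).2 hm
    exact ⟨fun _ => (G.lt_length_iff (by omega)).2 hn, _, hlt, hq,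
      (G.slot_eq_iff hn hm hi hj).2 heq, (G.lrvSat_gamF_iff hj).2 ⟨m, hm, rfl⟩⟩

lemma lrvSat_eqAt_slots (G : IsBlockEncoding k σ σ') {n : ℕ} (hn : n < σ.length)
    (i j : Fin k) (l : ℕ) :
    LRVSat σ' (eqAt (2 * (i : ℕ) + 1) (l * (2 * k + 1) + 2 * (j : ℕ) + 1))
        (n * (2 * k + 1)) ↔
      n + l < σ.length ∧ mval σ n i = mval σ (n + l) j := by
  rw [lrvSat_eqAt, show n * (2 * k + 1) + (l * (2 * k + 1) + 2 * (j : ℕ) + 1) =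
    (n + l) * (2 * k + 1) + (2 * j + 1) by ring, G.lt_length_iff (by omega),
    G.lt_length_iff (by omega)]
  exact ⟨fun ⟨_, hl, he⟩ => ⟨hl, (G.slot_eq_iff hn hl i.2 j.2).1 he⟩,
    fun ⟨hl, he⟩ => ⟨hn, hl, (G.slot_eq_iff hn hl i.2 j.2).2 he⟩⟩

lemma blockAgree_eq (G : IsBlockEncoding k σ σ') (i : Fin k) (l : ℕ) (j : Fin k) :
    BlockAgree k σ σ' (trOne (.eq i l j)) (SrcF.eq i l j).toLRV :=
  fun _ hn => G.lrvSat_eqAt_slots hn i j l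

lemma blockAgree_neq (G : IsBlockEncoding k σ σ') (i : Fin k) (l : ℕ) (j : Fin k) :
    BlockAgree k σ σ' (trOne (.neq i l j)) (SrcF.neq i l j).toLRV := by
  intro n hn
  simp only [trOne, SrcF.toLRV, LRV.neqX, LRVSat, lrvSat_nextn_top, G.lrvSat_eqAt_slots hn]
  rw [show n * (2 * k + 1) + (l * (2 * k + 1) + 2 * (j : ℕ) + 1) =
    (n + l) * (2 * k + 1) + (2 * j + 1) by ring, G.lt_length_iff (by omega)]

lemma blockAgree_oblig (G : IsBlockEncoding k σ σ') (i j : Fin k) :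
    BlockAgree k σ σ' (trOne (.oblig i j)) (SrcF.oblig i j).toLRV := by
  intro n hn
  have hEq : LRVSat σ' (eqAt (2 * (i : ℕ) + 1) (2 * (j : ℕ) + 1)) (n * (2 * k + 1)) ↔
      mval σ n i = mval σ n j := by
    simpa [hn] using G.lrvSat_eqAt_slots hn i j 0
  simp only [trOne, SrcF.toLRV, lrvSat_lor, LRVSat, lrvSat_nextn_top, lrvSat_top, hEq,
    G.lrvSat_xiF_iff hn i.2 j.2, G.lrvSat_xiF_iff hn j.2 j.2]
  constructor
  · rintro (⟨hE, m, hm, hlt, he⟩ | ⟨⟨hE, -⟩, m, hm, hlt, he⟩)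
    · rcases (Nat.mul_add_lt_mul_add_iff (by omega) (by omega)).1 hlt with h | ⟨-, h⟩
      · exact ⟨m, h, hm, hE.trans he, hm⟩
      · exact absurd h (lt_irrefl _)
    · rcases (Nat.mul_add_lt_mul_add_iff (by omega) (by omega)).1 hlt with h | ⟨rfl, -⟩
      · exact ⟨m, h, hm, he, hm⟩
      · exact absurd he hE
  · rintro ⟨m, hnm, hm, he, -⟩
    have hlt : ∀ r s, r < 2 * k + 1 → s < 2 * k + 1 →
        n * (2 * k + 1) + r < m * (2 * k + 1) + s :=
      fun r s hr hs => (Nat.mul_add_lt_mul_add_iff hr hs).2 (.inl hnm)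
    by_cases hE : mval σ n i = mval σ n j
    · exact .inl ⟨hE, m, hm, hlt _ _ (by omega) (by omega), hE.symm.trans he⟩
    · exact .inr ⟨⟨hE, (G.lt_length_iff (by omega)).2 hn⟩, m, hm,
        hlt _ _ (by omega) (by omega), he⟩

variable {A A' B B' : LRV}

lemma blockAgree_next (G : IsBlockEncoding k σ σ') (h : BlockAgree k σ σ' A' A) :
    BlockAgree k σ σ' (LRV.nextn (2 * k + 1) A') A.next := by
  intro n hn
  rw [lrvSat_nextn, show n * (2 * k + 1) + (2 * k + 1) = (n + 1) * (2 * k + 1) by ring,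
    G.mul_lt_length_iff, imp_iff_right (by omega)]
  exact and_congr_right (h (n + 1))

lemma blockAgree_prev (h : BlockAgree k σ σ' A' A) :
    BlockAgree k σ σ' (LRV.prevn (2 * k + 1) A') A.prev := by
  intro n hn
  rw [lrvSat_prevn, show n * (2 * k + 1) - (2 * k + 1) = (n - 1) * (2 * k + 1) by
    rw [Nat.sub_mul, one_mul], le_mul_iff_one_le_left (by omega)]
  exact and_congr_right fun _ => h (n - 1) (by omega)

lemma blockAgree_untl (G : IsBlockEncoding k σ σ') (ha : BlockAgree k σ σ' A' A)
    (hb : BlockAgree k σ σ' B' B) :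
    BlockAgree k σ σ' (.untl ((segF k).limp A') (.and (segF k) B')) (.untl A B) := by
  have hK : 0 < 2 * k + 1 := by omega
  intro n hn
  simp only [LRVSat, lrvSat_limp]
  constructor
  · rintro ⟨q, hnq, hq, ⟨hseg, hB⟩, hA⟩
    obtain ⟨m, hm, rfl⟩ := (G.lrvSat_segF_iff hq).1 hseg
    refine ⟨m, (Nat.mul_le_mul_right_iff hK).1 hnq, hm, (hb m hm).1 hB, fun l hnl hlm => ?_⟩
    have hl := hlm.trans hm
    exact (ha l hl).1 (hA _ (Nat.mul_le_mul_right _ hnl) ((Nat.mul_lt_mul_right hK).2 hlm)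
      (G.lrvSat_segF_mul hl))
  · rintro ⟨m, hnm, hm, hB, hA⟩
    have hmK := G.mul_lt_length_iff.2 hm
    refine ⟨_, Nat.mul_le_mul_right _ hnm, hmK, ⟨G.lrvSat_segF_mul hm, (hb m hm).2 hB⟩,
      fun q hnq hqm hseg => ?_⟩
    obtain ⟨l, hl, rfl⟩ := (G.lrvSat_segF_iff (hqm.trans hmK)).1 hseg
    exact (ha l hl).2
      (hA l ((Nat.mul_le_mul_right_iff hK).1 hnq) ((Nat.mul_lt_mul_right hK).1 hqm))

lemma blockAgree_sinc (G : IsBlockEncoding k σ σ') (ha : BlockAgree k σ σ' A' A)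
    (hb : BlockAgree k σ σ' B' B) :
    BlockAgree k σ σ' (.sinc ((segF k).limp A') (.and (segF k) B')) (.sinc A B) := by
  have hK : 0 < 2 * k + 1 := by omega
  intro n hn
  have hnK := G.mul_lt_length_iff.2 hn
  simp only [LRVSat, lrvSat_limp]
  constructor
  · rintro ⟨q, hqn, ⟨hseg, hB⟩, hA⟩
    obtain ⟨m, hm, rfl⟩ := (G.lrvSat_segF_iff (hqn.trans_lt hnK)).1 hseg
    refine ⟨m, (Nat.mul_le_mul_right_iff hK).1 hqn, (hb m hm).1 hB, fun l hml hln => ?_⟩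
    have hl := hln.trans_lt hn
    exact (ha l hl).1 (hA _ ((Nat.mul_lt_mul_right hK).2 hml) (Nat.mul_le_mul_right _ hln)
      (G.lrvSat_segF_mul hl))
  · rintro ⟨m, hmn, hB, hA⟩
    have hm := hmn.trans_lt hn
    refine ⟨_, Nat.mul_le_mul_right _ hmn, ⟨G.lrvSat_segF_mul hm, (hb m hm).2 hB⟩,
      fun q hmq hqn hseg => ?_⟩
    obtain ⟨l, hl, rfl⟩ := (G.lrvSat_segF_iff (hqn.trans_lt hnK)).1 hseg
    exact (ha l hl).2
      (hA l ((Nat.mul_lt_mul_right hK).1 hmq) ((Nat.mul_le_mul_right_iff hK).1 hqn))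

lemma blockAgree_trOne (G : IsBlockEncoding k σ σ') (ψ : SrcF k) :
    BlockAgree k σ σ' (trOne ψ) ψ.toLRV := by
  induction ψ with
  | eq i l j => exact G.blockAgree_eq i l j
  | neq i l j => exact G.blockAgree_neq i l j
  | oblig i j => exact G.blockAgree_oblig i j
  | and a b iha ihb => exact fun n hn => and_congr (iha n hn) (ihb n hn)
  | not a ih => exact fun n hn => not_congr (ih n hn)
  | next a ih => exact G.blockAgree_next ih
  | prev a ih => exact blockAgree_prev ih
  | untl a b iha ihb => exact G.blockAgree_untl iha ihb
  | sinc a b iha ihb => exact G.blockAgree_sinc iha ihb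

lemma lrvSat_manySegF (G : IsBlockEncoding k σ σ') (hσ : 0 < σ.length) :
    LRVSat σ' (manySegF k) 0 := by
  refine ⟨by simpa using G.lrvSat_segF_mul hσ,
    lrvSat_alG.2 fun q _ _ => lrvSat_limp.2 fun ⟨hq1, heq⟩ => ⟨hq1, ?_⟩⟩
  have hq : q + 1 = (q / (2 * k + 1) + 1) * (2 * k + 1) := by
    have := Nat.div_add_mod' q (2 * k + 1)
    have := (G.succ_eq_iff hq1).1 heq
    rw [Nat.succ_mul]
    omega
  rw [hq] at hq1 ⊢
  exact G.lrvSat_segF_mul (G.mul_lt_length_iff.1 hq1)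

end IsBlockEncoding

lemma mval_map_range {N p : ℕ} (f : ℕ → ℕ → ℕ) (hp : p < N) :
    mval ((List.range N).map f) p = f p := by
  simp [mval, List.getD_eq_getElem?_getD, hp]

def encode (σ : LRVModel) (k : ℕ) : LRVModel :=
  (List.range (σ.length * (2 * k + 1))).map fun p _ =>
    if p % (2 * k + 1) % 2 = 0 then 0 else mval σ (p / (2 * k + 1)) (p % (2 * k + 1) / 2) + 1

lemma mval_encode {σ : LRVModel} {k n o : ℕ} (hn : n < σ.length) (ho : o < 2 * k + 1) :
    mval (encode σ k) (n * (2 * k + 1) + o) 0 =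
      if o % 2 = 0 then 0 else mval σ n (o / 2) + 1 := by
  have hdiv : (n * (2 * k + 1) + o) / (2 * k + 1) = n := by
    rw [Nat.add_comm, Nat.add_mul_div_right _ _ (by omega), Nat.div_eq_of_lt ho, zero_add]
  rw [encode, mval_map_range _ ((Nat.mul_add_lt_mul_iff ho).2 hn)]
  simp only [hdiv, Nat.mul_add_mod_of_lt ho]

lemma isBlockEncoding_encode (σ : LRVModel) (k : ℕ) : IsBlockEncoding k σ (encode σ k) := by
  have hlen : (encode σ k).length = σ.length * (2 * k + 1) := by simp [encode]
  have hstart : ∀ n < σ.length, mval (encode σ k) (n * (2 * k + 1)) 0 = 0 := fun n hn => by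
    simpa using mval_encode (k := k) hn (o := 0) (by omega)
  refine ⟨hlen, fun n hn => ⟨?_, fun j hj => ?_, fun hlt => ?_⟩, fun hn hn' hi hj => ?_⟩
  · rw [hlen]
    exact (Nat.mul_add_lt_mul_iff (by omega)).2 hn
  · rw [hstart n hn, mval_encode hn (by omega)]
    split_ifs with h <;> simp [h]
  · rw [show n * (2 * k + 1) + (2 * k + 1) = (n + 1) * (2 * k + 1) by ring] at hlt ⊢
    rw [hstart n hn, hstart (n + 1) ((Nat.mul_lt_mul_right (by omega)).1 (hlen ▸ hlt))]
  · rw [mval_encode hn (by omega), mval_encode hn' (by omega)]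
    simp only [show ∀ i, (2 * i + 1) % 2 = 1 by omega, show ∀ i, (2 * i + 1) / 2 = i by omega,
      one_ne_zero, if_false, Nat.add_right_cancel_iff]

section Decode

variable {k : ℕ} {σ' : LRVModel}

lemma isSegment_of_lrvSat_manySegF (h : LRVSat σ' (manySegF k) 0) :
    ∀ n, n * (2 * k + 1) < σ'.length → IsSegment σ' k (n * (2 * k + 1)) := by
  obtain ⟨h0, hG⟩ := h
  rw [lrvSat_alG] at hG
  intro n
  induction n with
  | zero => exact fun _ => by simpa using lrvSat_segF.1 h0
  | succ n ih =>
    intro hlt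
    rw [Nat.succ_mul] at hlt ⊢
    have S := ih (by omega)
    have hnext :=
      (lrvSat_limp.1 (hG _ (Nat.zero_le _) (by omega)) ⟨by omega, S.last_eq_next (by omega)⟩).2
    rw [show n * (2 * k + 1) + 2 * k + 1 = n * (2 * k + 1) + (2 * k + 1) by omega] at hnext
    exact lrvSat_segF.1 hnext

lemma dvd_length_of_lrvSat_manySegF (h : LRVSat σ' (manySegF k) 0) : 2 * k + 1 ∣ σ'.length := by
  rw [Nat.dvd_iff_mod_eq_zero]
  by_contra hr
  have hdm := Nat.div_add_mod' σ'.length (2 * k + 1)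
  have hmod := Nat.mod_lt σ'.length (show 0 < 2 * k + 1 by omega)
  -- a trailing incomplete block would still have to be a whole segment
  have := (isSegment_of_lrvSat_manySegF h (σ'.length / (2 * k + 1)) (by omega)).lt_length
  omega

def decode (σ' : LRVModel) (k : ℕ) : LRVModel :=
  (List.range (σ'.length / (2 * k + 1))).map fun n i => mval σ' (n * (2 * k + 1) + (2 * i + 1)) 0

lemma isBlockEncoding_decode (h : LRVSat σ' (manySegF k) 0) :
    IsBlockEncoding k (decode σ' k) σ' := by
  have hlen : (decode σ' k).length = σ'.length / (2 * k + 1) := by simp [decode]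
  refine ⟨by rw [hlen, Nat.div_mul_cancel (dvd_length_of_lrvSat_manySegF h)],
    fun n hn => isSegment_of_lrvSat_manySegF h n ?_, fun hn hn' _ _ => ?_⟩
  · rw [hlen] at hn
    rw [← Nat.div_mul_cancel (dvd_length_of_lrvSat_manySegF h)]
    exact (Nat.mul_lt_mul_right (by omega)).2 hn
  · rw [hlen] at hn hn'
    unfold decode
    rw [mval_map_range _ hn, mval_map_range _ hn']

end Decode

/-- An LRV formula φ over `x_1, …, x_k` with atomic formulas of the forms
`x_i ≈ X^ℓ x_j`, `x_i ≉ X^ℓ x_j` and `⟨x_i ≈ x_j? ⊤⟩` is satisfiable iff the one-variable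
LRV formula `many-segments ∧ tr(φ)` is satisfiable. -/
theorem lrv_to_one_variable {k : ℕ} (φ : SrcF k) :
    LRVSatisfiable φ.toLRV ↔ LRVSatisfiable (.and (manySegF k) (trOne φ)) := by
  constructor
  · rintro ⟨σ, hσ, hφ⟩
    have G := isBlockEncoding_encode σ k
    have hN : 0 < σ.length := List.length_pos_iff.2 hσ
    refine ⟨encode σ k, List.ne_nil_of_length_pos (by simpa using G.mul_lt_length_iff.2 hN),
      G.lrvSat_manySegF hN, ?_⟩
    simpa using (G.blockAgree_trOne φ 0 hN).2 hφ
  · rintro ⟨σ', hσ', hmany, htr⟩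
    have G := isBlockEncoding_decode hmany
    have hN : 0 < (decode σ' k).length :=
      G.mul_lt_length_iff.1 (by simpa using List.length_pos_iff.2 hσ')
    exact ⟨decode σ' k, List.ne_nil_of_length_pos hN,
      (G.blockAgree_trOne φ 0 hN).1 (by simpa using htr)⟩
end
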